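/- arXiv:1011.0173 — 5 statements merged into one kernel-verified Lean document; each statement's English description precedes it below -/
import Mathlib

section
/- For every nonzero integer h, the number of pairs (u, u') of Fibonacci numbers (taken as u_j, u_i with indices j > i ≥ 2) with u - u' = h is at most 2. -/
/-!
If `u_j - u_i = h` with `2 ≤ i < j`, then `u_{j-2} = u_j - u_{j-1} ≤ h < u_j`. Hence two
representations `(j, i)`, `(j', i')` of `h` satisfy `u_{j'-2} < u_j`, i.e. `j' ≤ j + 1`: the first
indices lie in a window of two consecutive integers. Since `fib` is injective on indices `≥ 2`,
the first index determines the second.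
-/

open Set

theorem Nat.fib_sub_two_add_fib_le {i j : ℕ} (hij : i < j) : fib (j - 2) + fib i ≤ fib j := by
  rcases j with _ | _ | k
  · omega
  · obtain rfl : i = 0 := by omega
    simp
  · rw [fib_add_two]
    exact Nat.add_le_add_left (fib_mono (by omega)) _

theorem Nat.exists_subset_pair_of_forall_le_add_one {s : Set ℕ}
    (hs : ∀ a ∈ s, ∀ b ∈ s, a ≤ b + 1) : ∃ m, s ⊆ {m, m + 1} := by
  rcases s.eq_empty_or_nonempty with rfl | hne
  · exact ⟨0, empty_subset _⟩
  refine ⟨sInf s, fun a ha => ?_⟩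
  have hmin : sInf s ≤ a := Nat.sInf_le ha
  have hmax : a ≤ sInf s + 1 := hs a ha _ (Nat.sInf_mem hne)
  rw [mem_insert_iff, mem_singleton_iff]
  omega

def fibDiffReps (h : ℤ) : Set (ℕ × ℕ) :=
  {p | 2 ≤ p.2 ∧ p.2 < p.1 ∧ (Nat.fib p.1 : ℤ) - (Nat.fib p.2 : ℤ) = h}

namespace fibDiffReps

variable {h : ℤ} {p q : ℕ × ℕ}

theorem fib_sub_two_le (hp : p ∈ fibDiffReps h) : (Nat.fib (p.1 - 2) : ℤ) ≤ h := by
  obtain ⟨-, hlt, rfl⟩ := hp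
  have := Nat.fib_sub_two_add_fib_le hlt
  omega

theorem lt_fib (hp : p ∈ fibDiffReps h) : h < Nat.fib p.1 := by
  obtain ⟨hi, -, rfl⟩ := hp
  have := Nat.fib_pos.2 (by omega : 0 < p.2)
  omega

theorem fst_le_fst_add_one (hp : p ∈ fibDiffReps h) (hq : q ∈ fibDiffReps h) :
    p.1 ≤ q.1 + 1 := by
  have hfib : Nat.fib (p.1 - 2) < Nat.fib q.1 := by
    exact_mod_cast (fib_sub_two_le hp).trans_lt (lt_fib hq)
  have := Nat.fib_mono.reflect_lt hfib
  omega

theorem injOn_fst : InjOn Prod.fst (fibDiffReps h) := by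
  intro p hp q hq hpq
  have hfib : Nat.fib p.2 = Nat.fib q.2 := by
    have := hp.2.2
    have := hq.2.2
    rw [hpq] at *
    omega
  exact Prod.ext hpq (Nat.fib_strictMonoOn.injOn hp.1 hq.1 hfib)

end fibDiffReps

theorem fib_diff_reps_le_two_general (h : ℤ) :
    {p : ℕ × ℕ | 2 ≤ p.2 ∧ p.2 < p.1 ∧
      (Nat.fib p.1 : ℤ) - (Nat.fib p.2 : ℤ) = h}.Finite ∧
    {p : ℕ × ℕ | 2 ≤ p.2 ∧ p.2 < p.1 ∧
      (Nat.fib p.1 : ℤ) - (Nat.fib p.2 : ℤ) = h}.ncard ≤ 2 := by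
  change (fibDiffReps h).Finite ∧ (fibDiffReps h).ncard ≤ 2
  obtain ⟨m, hm⟩ : ∃ m, Prod.fst '' fibDiffReps h ⊆ {m, m + 1} := by
    refine Nat.exists_subset_pair_of_forall_le_add_one ?_
    rintro _ ⟨p, hp, rfl⟩ _ ⟨q, hq, rfl⟩
    exact fibDiffReps.fst_le_fst_add_one hp hq
  have hfin : (Prod.fst '' fibDiffReps h).Finite := (toFinite _).subset hm
  refine ⟨hfin.of_finite_image fibDiffReps.injOn_fst, ?_⟩
  rw [← fibDiffReps.injOn_fst.ncard_image]
  exact (ncard_le_ncard hm).trans_eq (ncard_pair (Nat.succ_ne_self m).symm)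

/-- For nonzero `h`, there are at most two index pairs `(j, i)` with
`j > i ≥ 2` and `u_j - u_i = h`. -/
theorem fib_diff_reps_le_two (h : ℤ) (hh : h ≠ 0) :
    {p : ℕ × ℕ | 2 ≤ p.2 ∧ p.2 < p.1 ∧
      (Nat.fib p.1 : ℤ) - (Nat.fib p.2 : ℤ) = h}.Finite ∧
    {p : ℕ × ℕ | 2 ≤ p.2 ∧ p.2 < p.1 ∧
      (Nat.fib p.1 : ℤ) - (Nat.fib p.2 : ℤ) = h}.ncard ≤ 2 :=
  fib_diff_reps_le_two_general h
end

section
/- For j > i ≥ 2 with j - i ≥ 2, the difference u_j - u_i has the Zeckendorf representation: if i = j - 2v then u_j - u_i = u_{j-1} + u_{j-3} + ... + u_{j-(2v-1)}, and if i = j - (2v+1) then u_j - u_i = u_{j-1} + u_{j-3} + ... + u_{j-(2v-1)} + u_{j-(2v+2)}, where v ≥ 1. -/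
/-! Peeling off the top term with `u_{n+2} = u_{n+1} + u_n` gives, by induction on `v`,
`u_{n+2v} = u_n + u_{n+2v-1} + u_{n+2v-3} + ⋯ + u_{n+1}`. Taking `n = i` is the first case;
taking `n = i + 1` and splitting `u_{i+1} = u_i + u_{i-1}` is the second. -/

open Finset

namespace Nat

theorem fib_add_two_mul_eq_add_sum (n v : ℕ) :
    fib (n + 2 * v) = fib n + ∑ m ∈ range v, fib (n + 2 * v - (2 * m + 1)) := by
  induction v with
  | zero => simp
  | succ v ih =>
    rw [sum_range_succ', mul_add_one, ← add_assoc, fib_add_two, ih]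
    have hshift : ∀ m, n + 2 * v + 2 - (2 * (m + 1) + 1) = n + 2 * v - (2 * m + 1) := by
      intro m; omega
    have htop : n + 2 * v + 2 - (2 * 0 + 1) = n + 2 * v + 1 := by omega
    simp only [hshift, htop]
    ring

end Nat

theorem fib_diff_zeckendorf_general (i v : ℕ) (hi : 2 ≤ i) :
    (∀ j : ℕ, j = i + 2 * v →
      Nat.fib j - Nat.fib i = ∑ m ∈ Finset.range v, Nat.fib (j - (2 * m + 1))) ∧
    (∀ j : ℕ, j = i + 2 * v + 1 →
      Nat.fib j - Nat.fib i =
        (∑ m ∈ Finset.range v, Nat.fib (j - (2 * m + 1))) + Nat.fib (j - (2 * v + 2))) := by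
  constructor
  · rintro j rfl
    rw [Nat.fib_add_two_mul_eq_add_sum, Nat.add_sub_cancel_left]
  · rintro j rfl
    have hj : i + 2 * v + 1 = (i + 1) + 2 * v := by ring
    have hlast : i + 2 * v + 1 - (2 * v + 2) = i - 1 := by omega
    rw [hlast, hj, Nat.fib_add_two_mul_eq_add_sum, Nat.fib_add_one (by omega)]
    omega

/-- Zeckendorf representation of `u_j - u_i` for `j - i ≥ 2`:
if `j = i + 2v` then `u_j - u_i = u_{j-1} + u_{j-3} + ⋯ + u_{j-(2v-1)}`, and
if `j = i + 2v + 1` then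
`u_j - u_i = u_{j-1} + u_{j-3} + ⋯ + u_{j-(2v-1)} + u_{j-(2v+2)}`, where `v ≥ 1`. -/
theorem fib_diff_zeckendorf (i v : ℕ) (hi : 2 ≤ i) (hv : 1 ≤ v) :
    (∀ j : ℕ, j = i + 2 * v →
      Nat.fib j - Nat.fib i = ∑ m ∈ Finset.range v, Nat.fib (j - (2 * m + 1))) ∧
    (∀ j : ℕ, j = i + 2 * v + 1 →
      Nat.fib j - Nat.fib i =
        (∑ m ∈ Finset.range v, Nat.fib (j - (2 * m + 1))) + Nat.fib (j - (2 * v + 2))) :=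
  fib_diff_zeckendorf_general i v hi
end

section
/- For every prime p and every residue y modulo p, the number of indices i in one full period of the Fibonacci sequence modulo p (i.e., 1 ≤ i ≤ k(p)) with u_i ≡ y (mod p) is at most 4. -/
/-- Fibonacci sequence cast into `ZMod p`. -/
def Fz (p n : ℕ) : ZMod p := (Nat.fib n : ZMod p)

lemma fz_rec (p n : ℕ) : Fz p (n + 2) = Fz p n + Fz p (n + 1) := by
  simp [Fz, Nat.fib_add_two]

lemma fz_cassini (p n : ℕ) :
    Fz p (n + 1) ^ 2 - Fz p n * Fz p (n + 2) = (-1 : ZMod p) ^ n := by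
  induction n with
  | zero => simp [Fz]
  | succ n ih =>
    have r1 := fz_rec p n
    have r2 := fz_rec p (n + 1)
    rw [show n + 1 + 2 = n + 3 by omega] at r2
    rw [show n + 1 + 1 = n + 2 by omega, show n + 1 + 2 = n + 3 by omega]
    linear_combination -ih + Fz p (n + 2) * r1 - Fz p (n + 1) * r2

lemma fz_period (p m i : ℕ) (h0 : Fz p (i + m) = Fz p i)
    (h1 : Fz p (i + 1 + m) = Fz p (i + 1)) :
    ∀ n, Fz p (n + m) = Fz p n := by
  have down : ∀ d, Fz p (i - d + m) = Fz p (i - d) ∧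
      Fz p (i - d + 1 + m) = Fz p (i - d + 1) := by
    intro d
    induction d with
    | zero => exact ⟨h0, h1⟩
    | succ d ih =>
      rcases Nat.lt_or_ge i (d + 1) with h | h
      · have e : i - (d + 1) = i - d := by omega
        rw [e]; exact ih
      · have e1 : i - d = i - (d + 1) + 1 := by omega
        rw [e1] at ih
        obtain ⟨ih1, ih2⟩ := ih
        refine ⟨?_, ih1⟩
        have r1 := fz_rec p (i - (d + 1))
        have r2 := fz_rec p (i - (d + 1) + m)
        rw [show i - (d + 1) + m + 2 = i - (d + 1) + 1 + 1 + m by omega,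
            show i - (d + 1) + m + 1 = i - (d + 1) + 1 + m by omega] at r2
        rw [show i - (d + 1) + 2 = i - (d + 1) + 1 + 1 by omega] at r1
        linear_combination ih2 - ih1 - r2 + r1
  have base := down i
  rw [Nat.sub_self] at base
  have up : ∀ n, Fz p (n + m) = Fz p n ∧ Fz p (n + 1 + m) = Fz p (n + 1) := by
    intro n
    induction n with
    | zero => exact base
    | succ n ih =>
      have r1 := fz_rec p n
      have r2 := fz_rec p (n + m)
      rw [show n + m + 2 = n + 1 + 1 + m by omega,
          show n + m + 1 = n + 1 + m by omega] at r2
      rw [show n + 2 = n + 1 + 1 by omega] at r1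
      exact ⟨ih.2, by linear_combination ih.1 + ih.2 + r2 - r1⟩
  exact fun n => (up n).1

/-- Schinzel–Somer: for a prime `p` with Pisano period `k`, each residue `y`
occurs at most `4` times among `u_1, …, u_k` modulo `p`. -/
theorem fib_residue_count_le_four (p k : ℕ) (hp : p.Prime)
    (hk : IsLeast {m : ℕ | 0 < m ∧
      ∀ i : ℕ, 1 ≤ i → Nat.fib (i + m) ≡ Nat.fib i [MOD p]} k)
    (y : ℕ) :
    ((Finset.Icc 1 k).filter fun i => Nat.fib i % p = y % p).card ≤ 4 := by
  haveI := Fact.mk hp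
  classical
  set Y : ZMod p := (y : ZMod p) with hY
  set S := (Finset.Icc 1 k).filter (fun i => Nat.fib i % p = y % p) with hS
  have hmem : ∀ i ∈ S, 1 ≤ i ∧ i ≤ k ∧ Fz p i = Y := by
    intro i hi
    rw [hS, Finset.mem_filter, Finset.mem_Icc] at hi
    exact ⟨hi.1.1, hi.1.2, (ZMod.natCast_eq_natCast_iff _ _ _).mpr hi.2⟩
  have inj : ∀ i j, 1 ≤ i → i ≤ j → j ≤ k → Fz p i = Fz p j →
      Fz p (i + 1) = Fz p (j + 1) → i = j := by
    intro i j hi hij hjk e0 e1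
    by_contra hne
    have hm : 0 < j - i := by omega
    have h0 : Fz p (i + (j - i)) = Fz p i := by
      rw [show i + (j - i) = j by omega]; exact e0.symm
    have h1 : Fz p (i + 1 + (j - i)) = Fz p (i + 1) := by
      rw [show i + 1 + (j - i) = j + 1 by omega]; exact e1.symm
    have per := fz_period p (j - i) i h0 h1
    have hmem' : (j - i) ∈ {m : ℕ | 0 < m ∧ ∀ n : ℕ, 1 ≤ n →
        Nat.fib (n + m) ≡ Nat.fib n [MOD p]} := by
      refine ⟨hm, fun n _ => ?_⟩
      exact (ZMod.natCast_eq_natCast_iff _ _ _).mp (per n)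
    have := hk.2 hmem'
    omega
  have quad : ∀ i, Fz p i = Y →
      Fz p (i + 1) ^ 2 - Y * Fz p (i + 1) = Y ^ 2 + (-1 : ZMod p) ^ i := by
    intro i h
    have c := fz_cassini p i
    rw [fz_rec p i, h] at c
    linear_combination c
  have pairdist : ∀ i j, i ∈ S → j ∈ S → i ≠ j →
      Fz p (i + 1) ≠ Fz p (j + 1) := by
    intro i j hi hj hne heq
    obtain ⟨hi1, hik, hiY⟩ := hmem i hi
    obtain ⟨hj1, hjk, hjY⟩ := hmem j hj
    rcases le_total i j with h | h
    · exact hne (inj i j hi1 h hjk (hiY.trans hjY.symm) heq)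
    · exact hne (inj j i hj1 h hik (hjY.trans hiY.symm) heq.symm).symm
  have hpow : ∀ i j : ℕ, i % 2 = j % 2 → ((-1 : ZMod p) ^ i = (-1) ^ j) := by
    intro i j h
    conv_lhs => rw [← Nat.div_add_mod i 2]
    conv_rhs => rw [← Nat.div_add_mod j 2]
    rw [pow_add, pow_add, pow_mul, pow_mul, neg_one_sq, one_pow, one_pow, h]
  have hfilter : ∀ r : ℕ, ((S.filter fun i => i % 2 = r).card ≤ 2) := by
    intro r
    by_contra hcon
    push_neg at hcon
    obtain ⟨a, ha, b, hb, c, hc', hab, hac, hbc⟩ := Finset.two_lt_card.mp hcon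
    simp only [Finset.mem_filter] at ha hb hc'
    have sum2 : ∀ i j, i ∈ S → i % 2 = r → j ∈ S → j % 2 = r → i ≠ j →
        Fz p (i + 1) + Fz p (j + 1) = Y := by
      intro i j hi hir hj hjr hne
      have qi := quad i (hmem i hi).2.2
      have qj := quad j (hmem j hj).2.2
      rw [hpow i j (by omega)] at qi
      have hz : (Fz p (i + 1) - Fz p (j + 1)) *
          (Fz p (i + 1) + Fz p (j + 1) - Y) = 0 := by
        linear_combination qi - qj
      rcases mul_eq_zero.mp hz with h | h
      · exact absurd (sub_eq_zero.mp h) (pairdist i j hi hj hne)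
      · linear_combination h
    have s1 := sum2 a b ha.1 ha.2 hb.1 hb.2 hab
    have s2 := sum2 a c ha.1 ha.2 hc'.1 hc'.2 hac
    exact pairdist b c hb.1 hc'.1 hbc (by linear_combination s1 - s2)
  have e := Finset.card_filter_add_card_filter_not
      (s := S) (p := fun i => i % 2 = 0)
  have h1 : (S.filter fun i => ¬ i % 2 = 0) = S.filter fun i => i % 2 = 1 := by
    apply Finset.filter_congr
    intro x _
    constructor <;> intro h <;> omega
  rw [h1] at e
  have h2 := hfilter 0
  have h3 := hfilter 1
  omega
end

section
/- Let d > 1, p a prime dividing d, and N large with L = ⌊log_τ N⌋. Then the number of pairs of Fibonacci numbers u, u' ≤ N with d | (u - u') is at most 4L(1 + L/k(p)). -/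
/-!
The map `fibStep : (x, y) ↦ (y, x + y)` on `(ZMod p)²` is injective and moves `(F n, F (n + 1))`
one step along the Fibonacci sequence, so `k(p)` is the minimal period of `(0, 1)` and the
pairs `(F n, F (n + 1))`, `n < k(p)`, are distinct. The form `y² - xy - x²` changes sign under
`fibStep` (Cassini's identity), so the term following a given residue `c = F n` is a root of one
of two monic quadratics: every residue occurs at most four times in a period.

Since `τ ^ n ≤ F (n + 2)`, a Fibonacci number `≤ N` has index at most `L + 2`. Splitting the
`L + 1` admissible indices into `Q` full periods and `s < k` further ones, the number `n c` of
indices with residue `c` is `Q A c + B c` with `A c, B c ≤ 4`, `∑ A c = k`, `∑ B c = s`. Hence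
the number of pairs, `∑ (n c)²`, is at most `4 (Q²k + 2Qs + s)`, which is `≤ 4L(k + L)/k` once
`Q ≥ 1` (that is, `N` large) and `k ≥ 3`.
-/

open Finset Function Polynomial Real

theorem minimalPeriod_eq_of_isLeast {α : Type*} {f : α → α} {x : α} {k : ℕ}
    (hk : IsLeast {m | 0 < m ∧ IsPeriodicPt f m x} k) : minimalPeriod f x = k :=
  le_antisymm (hk.1.2.minimalPeriod_le hk.1.1)
    (hk.2 ⟨hk.1.2.minimalPeriod_pos hk.1.1, isPeriodicPt_minimalPeriod f x⟩)

section Fibonacci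

variable {R : Type*}

def fibStep [Add R] (v : R × R) : R × R := (v.2, v.1 + v.2)

theorem fibStep_injective [Add R] [IsRightCancelAdd R] :
    Injective (fibStep : R × R → R × R) := by
  rintro ⟨a, b⟩ ⟨c, d⟩ h
  simp only [fibStep, Prod.mk.injEq] at h
  obtain ⟨rfl, h⟩ := h
  rw [add_right_cancel h]

theorem fibStep_iterate_zero_one [AddMonoidWithOne R] (n : ℕ) :
    fibStep^[n] ((0 : R), 1) = ((Nat.fib n : R), (Nat.fib (n + 1) : R)) := by
  induction n with
  | zero => simp
  | succ n ih => simp [iterate_succ_apply', ih, fibStep, Nat.fib_add_two]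

theorem isPeriodicPt_fibStep_iff [AddGroupWithOne R] {m : ℕ} :
    IsPeriodicPt fibStep m ((0 : R), 1) ↔ ∀ i, 1 ≤ i → (Nat.fib (i + m) : R) = Nat.fib i := by
  constructor
  · intro h i _
    have := congrArg Prod.fst ((iterate_add_apply fibStep i m (0, 1)).trans
      (congrArg fibStep^[i] h.eq))
    rwa [fibStep_iterate_zero_one, fibStep_iterate_zero_one] at this
  · intro h
    apply fibStep_injective
    -- the hypothesis says that `fibStep (0, 1) = (F 1, F 2)` is `m`-periodic
    rw [← iterate_succ_apply' fibStep m, iterate_succ_apply,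
      show fibStep ((0 : R), 1) = fibStep^[1] (0, 1) from rfl, ← iterate_add_apply,
      fibStep_iterate_zero_one, fibStep_iterate_zero_one, add_comm m, h 1 le_rfl,
      add_right_comm, h 2 (by norm_num)]

theorem three_le_of_isPeriodicPt_fibStep [AddMonoidWithOne R] [NeZero (1 : R)] {m : ℕ}
    (hm : 0 < m) (h : IsPeriodicPt fibStep m ((0 : R), 1)) : 3 ≤ m := by
  by_contra! hm3
  interval_cases m <;> simp [IsPeriodicPt, IsFixedPt, fibStep] at h

theorem periodic_fib_add_minimalPeriod [AddMonoidWithOne R] (a : ℕ) :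
    Periodic (fun t => (Nat.fib (t + a) : R)) (minimalPeriod fibStep ((0 : R), 1)) := fun t => by
  have := congrArg Prod.fst (iterate_add_minimalPeriod_eq (f := fibStep) (x := ((0 : R), 1))
    (n := t + a))
  simpa only [fibStep_iterate_zero_one, add_right_comm t] using this

def fibForm [CommRing R] (v : R × R) : R := v.2 ^ 2 - v.1 * v.2 - v.1 ^ 2

theorem fibForm_fibStep [CommRing R] (v : R × R) : fibForm (fibStep v) = -fibForm v := by
  simp only [fibForm, fibStep]; ring

theorem fibForm_iterate_fibStep [CommRing R] (n : ℕ) (v : R × R) :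
    fibForm (fibStep^[n] v) = (-1) ^ n * fibForm v := by
  induction n with
  | zero => simp
  | succ n ih => rw [iterate_succ_apply', fibForm_fibStep, ih, pow_succ]; ring

theorem card_filter_sq_sub_mul_eq_le_two [CommRing R] [IsDomain R] [DecidableEq R]
    (s : Finset R) (c e : R) : #{y ∈ s | y ^ 2 - c * y = e} ≤ 2 := by
  have hdeg : (X ^ 2 - C c * X - C e).natDegree = 2 := by
    rw [show (X ^ 2 - C c * X - C e : R[X]) = C 1 * X ^ 2 + C (-c) * X + C (-e) by simp; ring]
    exact natDegree_quadratic one_ne_zero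
  have hne : (X ^ 2 - C c * X - C e : R[X]) ≠ 0 := ne_zero_of_natDegree_gt (hdeg ▸ two_pos)
  refine (card_le_degree_of_subset_roots fun y hy => ?_).trans hdeg.le
  rw [Finset.filter_val, Multiset.mem_filter] at hy
  simp [mem_roots hne, hy.2]

theorem card_filter_iterate_fibStep_fst_eq_le_four [CommRing R] [IsDomain R] [DecidableEq R]
    (v : R × R) (c : R) : #{r ∈ range (minimalPeriod fibStep v) | (fibStep^[r] v).1 = c} ≤ 4 := by
  set S := {r ∈ range (minimalPeriod fibStep v) | (fibStep^[r] v).1 = c}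
  set y : ℕ → R := fun r => (fibStep^[r] v).2
  have hinj : Set.InjOn y S := by
    intro r hr s hs h
    simp only [coe_filter, mem_range, Set.mem_ofPred_eq, S] at hr hs
    exact iterate_injOn_Iio_minimalPeriod hr.1 hs.1 (Prod.ext (hr.2.trans hs.2.symm) h)
  have hroot : ∀ z ∈ S.image y,
      z ^ 2 - c * z = c ^ 2 + fibForm v ∨ z ^ 2 - c * z = c ^ 2 - fibForm v := by
    simp only [mem_image, mem_filter, S]
    rintro _ ⟨r, ⟨-, hr⟩, rfl⟩
    have := fibForm_iterate_fibStep r v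
    rw [fibForm, hr] at this
    rcases neg_one_pow_eq_or R r with h | h <;> rw [h] at this
    · left; linear_combination this
    · right; linear_combination this
  calc #S = #(S.image y) := (card_image_of_injOn hinj).symm
    _ ≤ #{z ∈ S.image y | z ^ 2 - c * z = c ^ 2 + fibForm v} +
        #{z ∈ S.image y | z ^ 2 - c * z = c ^ 2 - fibForm v} := by
      conv_lhs => rw [← filter_true_of_mem hroot, filter_or]
      exact card_union_le _ _
    _ ≤ 2 + 2 := add_le_add (card_filter_sq_sub_mul_eq_le_two _ _ _)
        (card_filter_sq_sub_mul_eq_le_two _ _ _)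

theorem count_fib_add_eq_le_four [CommRing R] [IsDomain R] [DecidableEq R] (a : ℕ) (c : R) :
    Nat.count (fun t => (Nat.fib (t + a) : R) = c) (minimalPeriod fibStep ((0 : R), 1)) ≤ 4 := by
  by_cases h : ((0 : R), 1) ∈ periodicPts fibStep
  · rw [← minimalPeriod_apply_iterate h a, Nat.count_eq_card_filter_range]
    convert card_filter_iterate_fibStep_fst_eq_le_four (fibStep^[a] ((0 : R), 1)) c using 3
    simp only [← iterate_add_apply]
    simp only [fibStep_iterate_zero_one]
  · simp [minimalPeriod_eq_zero_of_notMem_periodicPts h]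

end Fibonacci

theorem Nat.count_mul_add_of_periodic {P : ℕ → Prop} [DecidablePred P] {k : ℕ}
    (hP : Periodic P k) (Q s : ℕ) :
    Nat.count P (Q * k + s) = Q * Nat.count P k + Nat.count P s := by
  induction Q with
  | zero => simp
  | succ Q ih =>
    rw [show (Q + 1) * k + s = (Q * k + s) + k by ring, Nat.count_add']
    have hshift : Nat.count (fun j => P (j + k)) (Q * k + s) = Nat.count P (Q * k + s) := by
      congr 1; exact funext hP
    rw [hshift, ih]
    ring

theorem sum_count_apply_eq {α : Type*} [Fintype α] [DecidableEq α] (g : ℕ → α) (n : ℕ) :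
    ∑ c, Nat.count (g · = c) n = n := by
  simp only [Nat.count_eq_card_filter_range]
  rw [← card_eq_sum_card_fiberwise (fun _ _ => mem_univ _), card_range]

theorem card_filter_apply_eq_apply_eq_sum_sq {ι α : Type*} [Fintype α] [DecidableEq α]
    (s : Finset ι) (f : ι → α) : #{q ∈ s ×ˢ s | f q.1 = f q.2} = ∑ c, #{i ∈ s | f i = c} ^ 2 := by
  rw [card_eq_sum_card_fiberwise (f := fun q => f q.1) (t := univ) fun _ _ => mem_univ _]
  refine sum_congr rfl fun c _ => ?_
  rw [sq, ← card_product]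
  congr 1
  ext ⟨i, j⟩
  simp only [mem_filter, mem_product]
  grind

theorem sum_sq_count_le_of_periodic {α : Type*} [Fintype α] [DecidableEq α] {g : ℕ → α}
    {k b : ℕ} (hg : Periodic g k) (hb : ∀ c, Nat.count (g · = c) k ≤ b) {Q s : ℕ} (hs : s ≤ k) :
    ∑ c, Nat.count (g · = c) (Q * k + s) ^ 2 ≤ b * (Q ^ 2 * k + 2 * Q * s + s) := by
  calc ∑ c, Nat.count (g · = c) (Q * k + s) ^ 2
      = ∑ c, (Q * Nat.count (g · = c) k + Nat.count (g · = c) s) ^ 2 := by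
        refine sum_congr rfl fun c _ => ?_
        rw [Nat.count_mul_add_of_periodic fun x => by simp only [hg x]]
    _ ≤ ∑ c, b * (Q ^ 2 * Nat.count (g · = c) k + 2 * Q * Nat.count (g · = c) s +
          Nat.count (g · = c) s) := by
        gcongr with c
        have hA := hb c
        have hB := (Nat.count_monotone _ hs).trans hA
        generalize Nat.count (g · = c) k = A at hA hB ⊢
        generalize Nat.count (g · = c) s = B at hA hB ⊢
        nlinarith [Nat.mul_le_mul_left (Q ^ 2 * A) hA, Nat.mul_le_mul_left (2 * Q * B) hA,
          Nat.mul_le_mul_left B hB]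
    _ = b * (Q ^ 2 * k + 2 * Q * s + s) := by
        simp only [← mul_sum, sum_add_distrib, sum_count_apply_eq]

theorem card_pairs_mul_le_of_periodic {α : Type*} [Fintype α] [DecidableEq α] {g : ℕ → α}
    {k b L : ℕ} (hg : Periodic g k) (hk : 3 ≤ k) (hkL : k ≤ L + 1)
    (hb : ∀ c, Nat.count (g · = c) k ≤ b) :
    #{q ∈ range (L + 1) ×ˢ range (L + 1) | g q.1 = g q.2} * k ≤ b * L * (k + L) := by
  obtain ⟨Q, s, hQ, hs, hL⟩ : ∃ Q s, 1 ≤ Q ∧ s < k ∧ Q * k + s = L + 1 :=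
    ⟨(L + 1) / k, (L + 1) % k, (Nat.one_le_div_iff (by omega)).2 hkL, Nat.mod_lt _ (by omega),
      by rw [mul_comm]; exact Nat.div_add_mod _ _⟩
  rw [card_filter_apply_eq_apply_eq_sum_sq]
  simp only [← Nat.count_eq_card_filter_range, ← hL]
  -- `L = Q k + s - 1`; the remaining inequality reduces to `k (Q (k - 2) - 1) + (s - 1)² ≥ 0`.
  have key : (Q ^ 2 * k + 2 * Q * s + s) * k ≤ L * (k + L) := by
    have : L = Q * k + s - 1 := by omega
    subst this
    zify [show 1 ≤ Q * k + s by nlinarith]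
    nlinarith [sq_nonneg ((s : ℤ) - 1), mul_le_mul_of_nonneg_left
      (show (1 : ℤ) ≤ Q by exact_mod_cast hQ) (show (0 : ℤ) ≤ k - 2 by omega)]
  calc (∑ c, Nat.count (g · = c) (Q * k + s) ^ 2) * k ≤ b * (Q ^ 2 * k + 2 * Q * s + s) * k :=
        Nat.mul_le_mul_right _ (sum_sq_count_le_of_periodic hg hb hs.le)
    _ = b * ((Q ^ 2 * k + 2 * Q * s + s) * k) := by ring
    _ ≤ b * (L * (k + L)) := Nat.mul_le_mul_left _ key
    _ = b * L * (k + L) := by ring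

theorem goldenRatio_pow_le_fib (n : ℕ) : goldenRatio ^ n ≤ Nat.fib (n + 2) := by
  rw [← fib_succ_sub_goldenConj_mul_fib, Nat.fib_add_two, Nat.cast_add]
  nlinarith [neg_one_lt_goldenConj, (Nat.cast_nonneg (Nat.fib n) : (0 : ℝ) ≤ _)]

theorem le_floor_logb_goldenRatio {n N : ℕ} (h : goldenRatio ^ n ≤ N) :
    n ≤ ⌊logb goldenRatio N⌋₊ := by
  have hN : (0 : ℝ) < N := (pow_pos goldenRatio_pos n).trans_le h
  exact Nat.le_floor <| by
    rwa [le_logb_iff_rpow_le one_lt_goldenRatio hN, rpow_natCast]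

theorem sub_two_le_floor_logb_goldenRatio {i N : ℕ} (hi : 2 ≤ i) (hiN : Nat.fib i ≤ N) :
    i - 2 ≤ ⌊logb goldenRatio N⌋₊ :=
  le_floor_logb_goldenRatio <| (goldenRatio_pow_le_fib _).trans <| by
    rw [Nat.sub_add_cancel hi]; exact_mod_cast hiN

theorem card_fib_pairs_dvd_sub_le {d p : ℕ} (hpd : p ∣ d) (N : ℕ) :
    #{q ∈ Icc 2 (N + 1) ×ˢ Icc 2 (N + 1) | Nat.fib q.1 ≤ N ∧ Nat.fib q.2 ≤ N ∧
      (d : ℤ) ∣ (Nat.fib q.1 : ℤ) - (Nat.fib q.2 : ℤ)} ≤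
    #{q ∈ range (⌊logb goldenRatio N⌋₊ + 1) ×ˢ range (⌊logb goldenRatio N⌋₊ + 1) |
      (Nat.fib (q.1 + 2) : ZMod p) = Nat.fib (q.2 + 2)} := by
  refine card_le_card_of_injOn (fun q => (q.1 - 2, q.2 - 2)) ?_ ?_
  · intro q hq
    simp only [coe_filter, mem_product, mem_Icc, Set.mem_ofPred_eq] at hq
    obtain ⟨⟨⟨h1, -⟩, h2, -⟩, hf1, hf2, hdvd⟩ := hq
    have := sub_two_le_floor_logb_goldenRatio h1 hf1
    have := sub_two_le_floor_logb_goldenRatio h2 hf2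
    simp only [coe_filter, mem_product, mem_range, Set.mem_ofPred_eq, Nat.sub_add_cancel h1,
      Nat.sub_add_cancel h2]
    refine ⟨⟨by omega, by omega⟩, ?_⟩
    exact_mod_cast ((ZMod.intCast_eq_intCast_iff_dvd_sub _ _ p).2
      ((Int.natCast_dvd_natCast.2 hpd).trans hdvd)).symm
  · intro q hq q' hq' h
    simp only [coe_filter, mem_product, mem_Icc, Set.mem_ofPred_eq, Prod.mk.injEq] at hq hq' h
    ext <;> omega

theorem fib_pair_congruence_count_general (d p k : ℕ) (hp : p.Prime)
    (hpd : p ∣ d)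
    (hk : IsLeast {m : ℕ | 0 < m ∧
      ∀ i : ℕ, 1 ≤ i → Nat.fib (i + m) ≡ Nat.fib i [MOD p]} k) :
    ∃ N₀ : ℕ, ∀ N : ℕ, N₀ ≤ N →
      ∀ L : ℕ, L = ⌊Real.logb ((1 + Real.sqrt 5) / 2) N⌋₊ →
        ((((Finset.Icc 2 (N + 1)) ×ˢ (Finset.Icc 2 (N + 1))).filter fun q =>
            Nat.fib q.1 ≤ N ∧ Nat.fib q.2 ≤ N ∧
              (d : ℤ) ∣ (Nat.fib q.1 : ℤ) - (Nat.fib q.2 : ℤ)).card : ℝ) ≤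
          4 * L * (1 + (L : ℝ) / k) := by
  have : Fact p.Prime := ⟨hp⟩
  have hk' : IsLeast {m | 0 < m ∧ IsPeriodicPt fibStep m ((0 : ZMod p), 1)} k := by
    simpa only [isPeriodicPt_fibStep_iff, ZMod.natCast_eq_natCast_iff] using hk
  have hk3 : 3 ≤ k := three_le_of_isPeriodicPt_fibStep hk'.1.1 hk'.1.2
  have hperiod := minimalPeriod_eq_of_isLeast hk'
  have hg := periodic_fib_add_minimalPeriod (R := ZMod p) 2
  have hfiber := count_fib_add_eq_le_four (R := ZMod p) 2
  rw [hperiod] at hg hfiber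
  refine ⟨2 ^ k, fun N hN L hL => ?_⟩
  obtain rfl : L = ⌊logb goldenRatio N⌋₊ := hL
  have hkL : k ≤ ⌊logb goldenRatio N⌋₊ := le_floor_logb_goldenRatio <|
    calc goldenRatio ^ k ≤ 2 ^ k := pow_le_pow_left₀ goldenRatio_pos.le goldenRatio_lt_two.le k
      _ ≤ N := by exact_mod_cast hN
  have hpairs := (Nat.mul_le_mul_right k (card_fib_pairs_dvd_sub_le hpd N)).trans
    (card_pairs_mul_le_of_periodic hg hk3 (by omega) hfiber)
  have hkR : (0 : ℝ) < k := by exact_mod_cast (by omega : 0 < k)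
  calc _ ≤ ((4 * ⌊logb goldenRatio N⌋₊ * (k + ⌊logb goldenRatio N⌋₊) : ℕ) : ℝ) / k := by
        rw [le_div_iff₀ hkR]
        exact_mod_cast hpairs
    _ = _ := by field_simp; push_cast; ring

/-- Let `d > 1` and `p` a prime dividing `d`, with Pisano period `k`. For all
sufficiently large `N`, with `L = ⌊log_τ N⌋`, the number of (ordered, indexed)
pairs of Fibonacci numbers `u, u' ≤ N` with `d ∣ u - u'` is at most
`4L(1 + L/k)`. -/
theorem fib_pair_congruence_count (d p k : ℕ) (hd : 1 < d) (hp : p.Prime)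
    (hpd : p ∣ d)
    (hk : IsLeast {m : ℕ | 0 < m ∧
      ∀ i : ℕ, 1 ≤ i → Nat.fib (i + m) ≡ Nat.fib i [MOD p]} k) :
    ∃ N₀ : ℕ, ∀ N : ℕ, N₀ ≤ N →
      ∀ L : ℕ, L = ⌊Real.logb ((1 + Real.sqrt 5) / 2) N⌋₊ →
        ((((Finset.Icc 2 (N + 1)) ×ˢ (Finset.Icc 2 (N + 1))).filter fun q =>
            Nat.fib q.1 ≤ N ∧ Nat.fib q.2 ≤ N ∧
              (d : ℤ) ∣ (Nat.fib q.1 : ℤ) - (Nat.fib q.2 : ℤ)).card : ℝ) ≤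
          4 * L * (1 + (L : ℝ) / k) :=
  fib_pair_congruence_count_general d p k hp hpd hk
end

section
/- There exists a constant C such that for all x ≥ 2, Σ_{d ≤ x, d squarefree} μ²(d)/(d·k(LP(d))) ≤ C, where LP(d) is a prime divisor of d with maximal Pisano period k. -/
open Finset
lemma sum_le_sum_inj {α β : Type*} [DecidableEq β] (s : Finset α) (t : Finset β)
    (i : α → β) (hi : ∀ a ∈ s, i a ∈ t)
    (hinj : ∀ a ∈ s, ∀ b ∈ s, i a = i b → a = b)
    (f : α → ℝ) (g : β → ℝ) (hg : ∀ b ∈ t, 0 ≤ g b)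
    (hfg : ∀ a ∈ s, f a ≤ g (i a)) :
    ∑ a ∈ s, f a ≤ ∑ b ∈ t, g b := by
  calc ∑ a ∈ s, f a ≤ ∑ a ∈ s, g (i a) := Finset.sum_le_sum hfg
    _ = ∑ b ∈ s.image i, g b := (Finset.sum_image hinj).symm
    _ ≤ ∑ b ∈ t, g b := by
        apply Finset.sum_le_sum_of_subset_of_nonneg
        · intro b hb
          obtain ⟨a, ha, rfl⟩ := Finset.mem_image.mp hb
          exact hi a ha
        · intro b hb _; exact hg b hb

lemma fib_le_two_pow : ∀ n : ℕ, Nat.fib n ≤ 2 ^ n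
  | 0 => by simp
  | 1 => by simp
  | n + 2 => by
    rw [Nat.fib_add_two]
    have h1 := fib_le_two_pow n
    have h2 := fib_le_two_pow (n + 1)
    calc Nat.fib n + Nat.fib (n+1) ≤ 2^n + 2^(n+1) := Nat.add_le_add h1 h2
      _ ≤ 2^(n+2) := by ring_nf; omega

lemma card_primeFactors_le {n j : ℕ} (hn : 0 < n) (h : n ≤ 2 ^ j) :
    n.primeFactors.card ≤ j := by
  have h1 : 2 ^ n.primeFactors.card ≤ ∏ p ∈ n.primeFactors, p := by
    apply Finset.pow_card_le_prod
    intro p hp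
    exact (Nat.prime_of_mem_primeFactors hp).two_le
  have h2 : ∏ p ∈ n.primeFactors, p ≤ n :=
    Nat.le_of_dvd hn (Nat.prod_primeFactors_dvd n)
  have : (2:ℕ) ^ n.primeFactors.card ≤ 2 ^ j := le_trans h1 (le_trans h2 h)
  exact (Nat.pow_le_pow_iff_right (by norm_num)).mp this
lemma sqfree_sum_le_prod (A : Finset ℕ) (P : Finset ℕ)
    (hA : ∀ d ∈ A, Squarefree d ∧ d.primeFactors ⊆ P) :
    ∑ d ∈ A, (1 : ℝ) / d ≤ ∏ p ∈ P, (1 + 1 / (p:ℝ)) := by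
  have key : ∀ d ∈ A, (1:ℝ)/d = ∏ p ∈ d.primeFactors, (1:ℝ)/p := by
    intro d hd
    rw [Finset.prod_div_distrib, Finset.prod_const_one]
    congr 1
    rw [← Nat.cast_prod, Nat.prod_primeFactors_of_squarefree (hA d hd).1]
  calc ∑ d ∈ A, (1:ℝ)/d = ∑ d ∈ A, ∏ p ∈ d.primeFactors, (1:ℝ)/p :=
        Finset.sum_congr rfl key
    _ = ∑ T ∈ A.image Nat.primeFactors, ∏ p ∈ T, (1:ℝ)/p := by
        rw [Finset.sum_image]
        intro a ha b hb hab
        have ha' := (hA a ha).1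
        have hb' := (hA b hb).1
        rw [← Nat.prod_primeFactors_of_squarefree ha',
            ← Nat.prod_primeFactors_of_squarefree hb', hab]
    _ ≤ ∑ T ∈ P.powerset, ∏ p ∈ T, (1:ℝ)/p := by
        apply Finset.sum_le_sum_of_subset_of_nonneg
        · intro T hT
          obtain ⟨d, hd, rfl⟩ := Finset.mem_image.mp hT
          exact Finset.mem_powerset.mpr (hA d hd).2
        · intro T _ _
          exact Finset.prod_nonneg fun p _ => by positivity
    _ = ∏ p ∈ P, ((1:ℝ)/p + 1) := by
        rw [Finset.prod_add]
        apply Finset.sum_congr rfl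
        intro T _
        rw [Finset.prod_const_one, mul_one]
    _ = ∏ p ∈ P, (1 + 1/(p:ℝ)) := by
        apply Finset.prod_congr rfl; intro p _; ring

lemma prod_le_exp_sum (P : Finset ℕ) (f : ℕ → ℝ) (hf : ∀ p ∈ P, 0 ≤ f p) :
    ∏ p ∈ P, (1 + f p) ≤ Real.exp (∑ p ∈ P, f p) := by
  rw [Real.exp_sum]
  apply Finset.prod_le_prod
  · intro p hp; linarith [hf p hp]
  · intro p hp; linarith [Real.add_one_le_exp (f p)]

lemma harmonic_Icc_le (L : ℕ) (hL : 1 ≤ L) :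
    ∑ k ∈ Finset.Icc 1 L, (1 : ℝ) / k ≤ 1 + Real.log L := by
  induction L, hL using Nat.le_induction with
  | base => simp
  | succ n hn ih =>
    rw [Finset.sum_Icc_succ_top (by omega)]
    have hlog : Real.log n + 1/(n+1) ≤ Real.log (n+1) := by
      have hn0 : (0:ℝ) < n := by exact_mod_cast hn
      have h := Real.log_le_sub_one_of_pos (show (0:ℝ) < n/(n+1) from div_pos hn0 (by positivity))
      rw [Real.log_div (by positivity) (by positivity)] at h
      have : (n:ℝ)/(n+1) - 1 = -(1/(n+1)) := by field_simp; ring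
      rw [this] at h
      linarith
    push_cast
    push_cast at ih
    linarith
lemma block_sum_le (k : ℕ) (hk : 1 ≤ k) :
    ∑ q ∈ (Finset.Ioc (2^(k-1)) (2^k)).filter Nat.Prime, (1:ℝ)/q ≤ 8 / k := by
  rcases Nat.lt_or_ge k 2 with hk2 | hk2
  · interval_cases k
    rw [show (Finset.Ioc (2^0) (2^1)).filter Nat.Prime = {2} from by decide]
    norm_num
  obtain ⟨m, rfl⟩ : ∃ m, k = m + 2 := ⟨k - 2, by omega⟩
  set B := (Finset.Ioc (2^(m+1)) (2^(m+2))).filter Nat.Prime with hB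
  have hcard : (m+1) * B.card ≤ 2^(m+3) := by
    have h1 : (2:ℕ)^((m+1) * B.card) ≤ 2 ^ (2^(m+3)) := by
      calc (2:ℕ)^((m+1) * B.card) = (2^(m+1))^B.card := by rw [pow_mul]
        _ ≤ ∏ q ∈ B, q := by
            apply Finset.pow_card_le_prod
            intro q hq
            exact le_of_lt (Finset.mem_Ioc.mp (Finset.mem_filter.mp hq).1).1
        _ ≤ primorial (2^(m+2)) := by
            apply Finset.prod_le_prod_of_subset_of_one_le'
            · intro q hq
              rw [Finset.mem_filter] at hq ⊢
              refine ⟨Finset.mem_range.mpr ?_, hq.2⟩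
              have := (Finset.mem_Ioc.mp hq.1).2
              omega
            · intro q hq _
              exact (Finset.mem_filter.mp hq).2.one_lt.le
        _ ≤ 4 ^ (2^(m+2)) := primorial_le_4_pow _
        _ = 2 ^ (2^(m+3)) := by
            rw [show (4:ℕ) = 2^2 from rfl, ← pow_mul, pow_succ]
            ring_nf
    exact (Nat.pow_le_pow_iff_right (by norm_num)).mp h1
  have hterm : ∀ q ∈ B, (1:ℝ)/q ≤ ((2:ℝ)^(m+1))⁻¹ := by
    intro q hq
    have hq1 := (Finset.mem_Ioc.mp (Finset.mem_filter.mp hq).1).1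
    have : ((2:ℝ)^(m+1)) ≤ (q:ℝ) := by exact_mod_cast le_of_lt hq1
    rw [one_div]
    exact inv_anti₀ (by positivity) this
  have hsum : ∑ q ∈ B, (1:ℝ)/q ≤ B.card * ((2:ℝ)^(m+1))⁻¹ := by
    calc ∑ q ∈ B, (1:ℝ)/q ≤ B.card • ((2:ℝ)^(m+1))⁻¹ := Finset.sum_le_card_nsmul _ _ _ hterm
      _ = B.card * ((2:ℝ)^(m+1))⁻¹ := by rw [nsmul_eq_mul]
  have hcardR : (B.card : ℝ) ≤ 2^(m+3) / (m+1) := by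
    rw [le_div_iff₀ (by positivity)]
    calc (B.card : ℝ) * (m+1) = ((m+1) * B.card : ℕ) := by push_cast; ring
      _ ≤ ((2:ℕ)^(m+3) : ℝ) := by exact_mod_cast hcard
      _ = (2:ℝ)^(m+3) := by push_cast; ring
  calc ∑ q ∈ B, (1:ℝ)/q ≤ B.card * ((2:ℝ)^(m+1))⁻¹ := hsum
    _ ≤ (2^(m+3) / (m+1)) * ((2:ℝ)^(m+1))⁻¹ := by
        apply mul_le_mul_of_nonneg_right hcardR (by positivity)
    _ = 4 / (m+1) := by
        rw [pow_add]
        field_simp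
        ring
    _ ≤ 8 / (m+2) := by
        rw [div_le_div_iff₀ (by positivity) (by positivity)]
        nlinarith [ (show (0:ℝ) ≤ m by positivity) ]
    _ = 8 / ((m+2:ℕ):ℝ) := by push_cast; ring
lemma mertens_lite (y : ℕ) (hy : 2 ≤ y) :
    ∑ q ∈ (Finset.Icc 2 y).filter Nat.Prime, (1:ℝ)/q ≤
      8 + 8 * Real.log (Nat.clog 2 y) := by
  set L := Nat.clog 2 y with hLdef
  have hL : 1 ≤ L := Nat.clog_pos (by norm_num) hy
  have step1 : ∑ q ∈ (Finset.Icc 2 y).filter Nat.Prime, (1:ℝ)/q ≤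
      ∑ p ∈ (Finset.Icc 1 L).sigma
          (fun k => (Finset.Ioc (2^(k-1)) (2^k)).filter Nat.Prime), (1:ℝ)/p.2 := by
    apply sum_le_sum_inj _ _ (fun q => ⟨Nat.clog 2 q, q⟩)
    · intro q hq
      rw [Finset.mem_filter, Finset.mem_Icc] at hq
      obtain ⟨⟨hq2, hqy⟩, hqp⟩ := hq
      rw [Finset.mem_sigma, Finset.mem_Icc, Finset.mem_filter, Finset.mem_Ioc]
      refine ⟨⟨Nat.clog_pos (by norm_num) hq2, Nat.clog_mono_right 2 hqy⟩,
        ⟨Nat.pow_pred_clog_lt_self (by norm_num) (by omega), Nat.le_pow_clog (by norm_num) q⟩, hqp⟩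
    · intro a _ b _ h
      exact congrArg Sigma.snd h
    · intro b _; positivity
    · intro a _; exact le_refl _
  have step2 : ∑ p ∈ (Finset.Icc 1 L).sigma
      (fun k => (Finset.Ioc (2^(k-1)) (2^k)).filter Nat.Prime), (1:ℝ)/p.2 ≤
      ∑ k ∈ Finset.Icc 1 L, 8 / (k:ℝ) := by
    rw [Finset.sum_sigma]
    apply Finset.sum_le_sum
    intro k hk
    exact block_sum_le k (Finset.mem_Icc.mp hk).1
  have step3 : ∑ k ∈ Finset.Icc 1 L, 8 / (k:ℝ) ≤ 8 + 8 * Real.log L := by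
    have : ∑ k ∈ Finset.Icc 1 L, 8 / (k:ℝ) = 8 * ∑ k ∈ Finset.Icc 1 L, 1 / (k:ℝ) := by
      rw [Finset.mul_sum]; apply Finset.sum_congr rfl; intro k _; ring
    rw [this]
    have := harmonic_Icc_le L hL
    linarith
  linarith
lemma telescope_eq (x : ℕ) :
    ∑ j ∈ Finset.Icc 1 x, ((j:ℝ)⁻¹ - ((j:ℝ)+1)⁻¹) = 1 - ((x:ℝ)+1)⁻¹ := by
  induction x with
  | zero => simp
  | succ n ih =>
    rw [Finset.sum_Icc_succ_top (by omega : 1 ≤ n + 1), ih]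
    have h1 : ((n:ℝ)+1) ≠ 0 := by positivity
    have h2 : ((n:ℝ)+2) ≠ 0 := by positivity
    push_cast
    field_simp
    ring

lemma telescope_sum (x : ℕ) :
    ∑ j ∈ Finset.Icc 1 x, ((j:ℝ)⁻¹ - ((j:ℝ)+1)⁻¹) ≤ 1 := by
  rw [telescope_eq]
  have : (0:ℝ) < (x:ℝ)+1 := by positivity
  have : (0:ℝ) ≤ ((x:ℝ)+1)⁻¹ := by positivity
  linarith

lemma inner_bad_sum (j : ℕ) (hj : 1 ≤ j) :
    ∑ q ∈ ((Nat.fib j).primeFactors).filter (fun q => j^6 ≤ q), (1:ℝ)/q ≤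
      2 * ((j:ℝ)⁻¹ - ((j:ℝ)+1)⁻¹) := by
  have hjR : (0:ℝ) < j := by exact_mod_cast hj
  have hcard : (((Nat.fib j).primeFactors).filter (fun q => j^6 ≤ q)).card ≤ j := by
    calc _ ≤ ((Nat.fib j).primeFactors).card := Finset.card_filter_le _ _
      _ ≤ j := card_primeFactors_le (Nat.fib_pos.mpr hj) (fib_le_two_pow j)
  have hterm : ∀ q ∈ ((Nat.fib j).primeFactors).filter (fun q => j^6 ≤ q),
      (1:ℝ)/q ≤ ((j:ℝ)^6)⁻¹ := by
    intro q hq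
    have h6 : (j:ℝ)^6 ≤ q := by exact_mod_cast (Finset.mem_filter.mp hq).2
    rw [one_div]
    exact inv_anti₀ (by positivity) h6
  calc ∑ q ∈ ((Nat.fib j).primeFactors).filter (fun q => j^6 ≤ q), (1:ℝ)/q
      ≤ (((Nat.fib j).primeFactors).filter (fun q => j^6 ≤ q)).card • ((j:ℝ)^6)⁻¹ :=
        Finset.sum_le_card_nsmul _ _ _ hterm
    _ = (((Nat.fib j).primeFactors).filter (fun q => j^6 ≤ q)).card * ((j:ℝ)^6)⁻¹ := by
        rw [nsmul_eq_mul]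
    _ ≤ (j:ℝ) * ((j:ℝ)^6)⁻¹ := by
        apply mul_le_mul_of_nonneg_right (by exact_mod_cast hcard) (by positivity)
    _ ≤ 2 * ((j:ℝ)⁻¹ - ((j:ℝ)+1)⁻¹) := by
        have heq : (j:ℝ)⁻¹ - ((j:ℝ)+1)⁻¹ = ((j:ℝ)*((j:ℝ)+1))⁻¹ := by field_simp; ring
        rw [heq, ← div_eq_mul_inv, ← div_eq_mul_inv,
          div_le_div_iff₀ (by positivity) (by positivity)]
        have h1 : (1:ℝ) ≤ j := by exact_mod_cast hj
        have h2 : (j:ℝ)^2 ≤ (j:ℝ)^6 := pow_le_pow_right₀ h1 (by norm_num)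
        have h3 : (j:ℝ)^3 ≤ (j:ℝ)^6 := pow_le_pow_right₀ h1 (by norm_num)
        nlinarith

lemma bad_sum (K : ℕ → ℕ) (hfib : ∀ p : ℕ, p.Prime → p ∣ Nat.fib (K p))
    (hK1 : ∀ p : ℕ, p.Prime → 1 ≤ K p) (x : ℕ) :
    ∑ q ∈ (Finset.Icc 2 x).filter (fun q => Nat.Prime q ∧ (K q)^6 ≤ q),
      (1:ℝ)/q ≤ 2 := by
  have step1 : ∑ q ∈ (Finset.Icc 2 x).filter (fun q => Nat.Prime q ∧ (K q)^6 ≤ q),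
      (1:ℝ)/q ≤ ∑ p ∈ (Finset.Icc 1 x).sigma
        (fun j => ((Nat.fib j).primeFactors).filter (fun q => j^6 ≤ q)), (1:ℝ)/p.2 := by
    apply sum_le_sum_inj _ _ (fun q => ⟨K q, q⟩)
    · intro q hq
      rw [Finset.mem_filter, Finset.mem_Icc] at hq
      obtain ⟨⟨hq2, hqx⟩, hqp, hqbad⟩ := hq
      have hK1q := hK1 q hqp
      rw [Finset.mem_sigma, Finset.mem_Icc, Finset.mem_filter]
      refine ⟨⟨hK1q, ?_⟩, ?_, hqbad⟩
      · calc K q ≤ (K q)^6 := Nat.le_self_pow (by norm_num) _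
          _ ≤ q := hqbad
          _ ≤ x := hqx
      · exact Nat.mem_primeFactors.mpr ⟨hqp, hfib q hqp,
          Nat.pos_iff_ne_zero.mp (Nat.fib_pos.mpr hK1q)⟩
    · intro a _ b _ h
      exact congrArg Sigma.snd h
    · intro b _; positivity
    · intro a _; exact le_refl _
  have step2 : ∑ p ∈ (Finset.Icc 1 x).sigma
      (fun j => ((Nat.fib j).primeFactors).filter (fun q => j^6 ≤ q)), (1:ℝ)/p.2 ≤
      ∑ j ∈ Finset.Icc 1 x, 2 * ((j:ℝ)⁻¹ - ((j:ℝ)+1)⁻¹) := by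
    rw [Finset.sum_sigma]
    apply Finset.sum_le_sum
    intro j hj
    exact inner_bad_sum j (Finset.mem_Icc.mp hj).1
  have step3 : ∑ j ∈ Finset.Icc 1 x, 2 * ((j:ℝ)⁻¹ - ((j:ℝ)+1)⁻¹) ≤ 2 := by
    rw [← Finset.mul_sum]
    have := telescope_sum x
    linarith
  linarith
lemma K_facts (K : ℕ → ℕ)
    (hK : ∀ n : ℕ, 1 ≤ n → IsLeast {m : ℕ | 0 < m ∧
      ∀ i : ℕ, 1 ≤ i → Nat.fib (i + m) ≡ Nat.fib i [MOD n]} (K n))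
    (p : ℕ) (hp : 2 ≤ p) : 1 ≤ K p ∧ p ∣ Nat.fib (K p) := by
  obtain ⟨⟨hpos, hcong⟩, -⟩ := hK p (by omega)
  refine ⟨hpos, ?_⟩
  have h1 : Nat.fib (1 + K p) ≡ 1 [MOD p] := by
    simpa using hcong 1 (by norm_num)
  have h2 : Nat.fib (2 + K p) ≡ 1 [MOD p] := by
    simpa using hcong 2 (by norm_num)
  have hfib : Nat.fib (2 + K p) = Nat.fib (K p) + Nat.fib (1 + K p) := by
    have : 2 + K p = K p + 2 := by ring
    rw [this, Nat.fib_add_two, add_comm 1 (K p)]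
  rw [hfib] at h2
  have h3 : Nat.fib (K p) + Nat.fib (1 + K p) ≡ 0 + Nat.fib (1 + K p) [MOD p] := by
    calc Nat.fib (K p) + Nat.fib (1 + K p) ≡ 1 [MOD p] := h2
      _ = 0 + 1 := by ring
      _ ≡ 0 + Nat.fib (1 + K p) [MOD p] := (Nat.ModEq.refl 0).add h1.symm
  have h4 : Nat.fib (K p) ≡ 0 [MOD p] := Nat.ModEq.add_right_cancel' _ h3
  exact (Nat.modEq_zero_iff_dvd).mp h4

lemma log_le_96 (x : ℝ) (hx : 1 ≤ x) : Real.log x ≤ 96 * x ^ ((1:ℝ)/96) := by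
  have hx0 : (0:ℝ) < x := by linarith
  have h1 : Real.log (x ^ ((1:ℝ)/96)) ≤ x ^ ((1:ℝ)/96) - 1 :=
    Real.log_le_sub_one_of_pos (Real.rpow_pos_of_pos hx0 _)
  rw [Real.log_rpow hx0] at h1
  nlinarith [Real.rpow_pos_of_pos hx0 ((1:ℝ)/96)]
lemma inner_m_sum (K : ℕ → ℕ) (hfib : ∀ p : ℕ, p.Prime → p ∣ Nat.fib (K p))
    (hK1 : ∀ p : ℕ, p.Prime → 1 ≤ K p) (x p : ℕ) (hp2 : 2 ≤ p) :
    ∑ m ∈ (Finset.Icc 1 x).filter (fun m => Squarefree m ∧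
        m.primeFactors ⊆ (Finset.Icc 2 x).filter
          (fun q => Nat.Prime q ∧ ((K q)^6 ≤ q ∨ q < p))),
      (1:ℝ)/m ≤ (Real.exp 10 * 288^8) * (p:ℝ) ^ ((1:ℝ)/12) := by
  set Qp := (Finset.Icc 2 x).filter (fun q => Nat.Prime q ∧ ((K q)^6 ≤ q ∨ q < p)) with hQp
  have hclog1 : 1 ≤ Nat.clog 2 p := Nat.clog_pos (by norm_num) hp2
  set L : ℝ := (Nat.clog 2 p : ℝ) with hLdef
  have hL1 : (1:ℝ) ≤ L := by rw [hLdef]; exact_mod_cast hclog1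
  have hlogL0 : 0 ≤ Real.log L := Real.log_nonneg hL1
  -- step 1/2: sum ≤ exp (sum over Qp)
  have h1 : ∑ m ∈ (Finset.Icc 1 x).filter (fun m => Squarefree m ∧
        m.primeFactors ⊆ Qp), (1:ℝ)/m ≤ Real.exp (∑ q ∈ Qp, (1:ℝ)/q) := by
    calc _ ≤ ∏ q ∈ Qp, (1 + 1/(q:ℝ)) := by
          apply sqfree_sum_le_prod
          intro d hd
          exact (Finset.mem_filter.mp hd).2
      _ ≤ Real.exp (∑ q ∈ Qp, (1:ℝ)/q) := by
          apply prod_le_exp_sum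
          intro q _; positivity
  -- step 3: sum over Qp ≤ 10 + 8 log L
  have h3 : ∑ q ∈ Qp, (1:ℝ)/q ≤ 10 + 8 * Real.log L := by
    set A := (Finset.Icc 2 x).filter (fun q => Nat.Prime q ∧ (K q)^6 ≤ q) with hA
    set B := (Finset.Icc 2 (p-1)).filter Nat.Prime with hB
    have hsub : Qp ⊆ A ∪ B := by
      intro q hq
      rw [hQp, Finset.mem_filter, Finset.mem_Icc] at hq
      obtain ⟨⟨hq2, hqx⟩, hqp, hqor⟩ := hq
      rw [Finset.mem_union, hA, hB, Finset.mem_filter, Finset.mem_filter, Finset.mem_Icc,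
        Finset.mem_Icc]
      rcases hqor with hbad | hlt
      · exact Or.inl ⟨⟨hq2, hqx⟩, hqp, hbad⟩
      · exact Or.inr ⟨⟨hq2, by omega⟩, hqp⟩
    have hQle : ∑ q ∈ Qp, (1:ℝ)/q ≤ ∑ q ∈ A, (1:ℝ)/q + ∑ q ∈ B, (1:ℝ)/q := by
      calc ∑ q ∈ Qp, (1:ℝ)/q ≤ ∑ q ∈ A ∪ B, (1:ℝ)/q := by
            apply Finset.sum_le_sum_of_subset_of_nonneg hsub
            intro q _ _; positivity
        _ ≤ ∑ q ∈ A, (1:ℝ)/q + ∑ q ∈ B, (1:ℝ)/q := by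
            have := Finset.sum_union_inter (s₁ := A) (s₂ := B) (f := fun q => (1:ℝ)/q)
            have hpos : 0 ≤ ∑ q ∈ A ∩ B, (1:ℝ)/q :=
              Finset.sum_nonneg fun q _ => by positivity
            linarith
    have hAle : ∑ q ∈ A, (1:ℝ)/q ≤ 2 := bad_sum K hfib hK1 x
    have hBle : ∑ q ∈ B, (1:ℝ)/q ≤ 8 + 8 * Real.log L := by
      rcases Nat.lt_or_ge p 3 with hp3 | hp3
      · have : p = 2 := by omega
        subst this
        have : B = ∅ := by rw [hB]; rfl
        rw [this]
        simp
        positivity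
      · have h := mertens_lite (p-1) (by omega)
        have hmono : Real.log (Nat.clog 2 (p-1)) ≤ Real.log L := by
          apply Real.log_le_log
          · exact_mod_cast Nat.clog_pos (by norm_num) (by omega : 2 ≤ p - 1)
          · rw [hLdef]
            exact_mod_cast Nat.clog_mono_right 2 (by omega : p - 1 ≤ p)
        rw [← hB] at h
        linarith
    linarith
  -- step 4: exp (10 + 8 log L) ≤ exp 10 * 288^8 * p^(1/12)
  have hp0 : (0:ℝ) < p := by positivity
  have hp1 : (1:ℝ) ≤ p := by exact_mod_cast (by omega : 1 ≤ p)
  have hlogp : Real.log 2 ≤ Real.log p := by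
    apply Real.log_le_log (by norm_num)
    exact_mod_cast hp2
  have hL3 : L ≤ 3 * Real.log p := by
    have hpow : (2:ℕ)^(Nat.clog 2 p - 1) < p :=
      Nat.pow_pred_clog_lt_self (by norm_num) (by omega)
    have hpowR : (2:ℝ)^((Nat.clog 2 p - 1 : ℕ):ℕ) ≤ (p:ℝ) := by
      exact_mod_cast le_of_lt hpow
    have hlog1 : ((Nat.clog 2 p - 1 : ℕ):ℝ) * Real.log 2 ≤ Real.log p := by
      rw [← Real.log_pow]
      apply Real.log_le_log (by positivity) hpowR
    have hcast : ((Nat.clog 2 p - 1 : ℕ):ℝ) = L - 1 := by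
      rw [hLdef, Nat.cast_sub hclog1]; norm_num
    rw [hcast] at hlog1
    have hl2a := Real.log_two_gt_d9
    have hl2b := Real.log_two_lt_d9
    nlinarith
  have hlogp0 : 0 ≤ Real.log p := Real.log_nonneg hp1
  have hL8 : L^8 ≤ 288^8 * (p:ℝ) ^ ((1:ℝ)/12) := by
    have e1 : L^8 ≤ (3 * Real.log p)^8 := by
      apply pow_le_pow_left₀ (by linarith) hL3
    have e2 : (Real.log p)^8 ≤ (96 * (p:ℝ) ^ ((1:ℝ)/96))^8 := by
      apply pow_le_pow_left₀ hlogp0 (log_le_96 p hp1)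
    have e3 : ((p:ℝ) ^ ((1:ℝ)/96))^(8:ℕ) = (p:ℝ) ^ ((1:ℝ)/12) := by
      rw [← Real.rpow_natCast ((p:ℝ) ^ ((1:ℝ)/96)) 8, ← Real.rpow_mul (le_of_lt hp0)]
      norm_num
    calc L^8 ≤ (3 * Real.log p)^8 := e1
      _ = 3^8 * (Real.log p)^8 := by rw [mul_pow]
      _ ≤ 3^8 * (96 * (p:ℝ) ^ ((1:ℝ)/96))^8 := by
          apply mul_le_mul_of_nonneg_left e2 (by norm_num)
      _ = 288^8 * (p:ℝ) ^ ((1:ℝ)/12) := by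
          rw [mul_pow, ← mul_assoc, e3]
          norm_num
  have hexp : Real.exp (10 + 8 * Real.log L) = Real.exp 10 * L^8 := by
    rw [Real.exp_add]
    congr 1
    rw [show (8:ℝ) * Real.log L = Real.log (L^8) by rw [Real.log_pow]; norm_num]
    exact Real.exp_log (by positivity)
  calc ∑ m ∈ (Finset.Icc 1 x).filter (fun m => Squarefree m ∧
        m.primeFactors ⊆ Qp), (1:ℝ)/m ≤ Real.exp (∑ q ∈ Qp, (1:ℝ)/q) := h1
    _ ≤ Real.exp (10 + 8 * Real.log L) := Real.exp_le_exp.mpr h3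
    _ = Real.exp 10 * L^8 := hexp
    _ ≤ Real.exp 10 * (288^8 * (p:ℝ) ^ ((1:ℝ)/12)) := by
        apply mul_le_mul_of_nonneg_left hL8 (le_of_lt (Real.exp_pos 10))
    _ = (Real.exp 10 * 288^8) * (p:ℝ) ^ ((1:ℝ)/12) := by ring
/-- The partial sums `Σ_{1 < d ≤ x, d squarefree} μ²(d)/(d·k(LP(d)))` are
uniformly bounded, where `K` is the Pisano period function and `LP d` is a
prime factor of `d` with maximal Pisano period. -/
theorem sum_inv_pisano_LP_bounded (K LP : ℕ → ℕ)
    (hK : ∀ n : ℕ, 1 ≤ n → IsLeast {m : ℕ | 0 < m ∧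
      ∀ i : ℕ, 1 ≤ i → Nat.fib (i + m) ≡ Nat.fib i [MOD n]} (K n))
    (hLP : ∀ d : ℕ, 1 < d → Squarefree d →
      LP d ∈ d.primeFactors ∧ ∀ p ∈ d.primeFactors, K p ≤ K (LP d)) :
    ∃ C : ℝ, ∀ x : ℕ, 2 ≤ x →
      ∑ d ∈ (Finset.Icc 2 x).filter Squarefree,
        (1 : ℝ) / (d * K (LP d)) ≤ C := by
  classical
  have hK1 : ∀ p : ℕ, p.Prime → 1 ≤ K p := fun p hp => (K_facts K hK p hp.two_le).1
  have hfib : ∀ p : ℕ, p.Prime → p ∣ Nat.fib (K p) := fun p hp => (K_facts K hK p hp.two_le).2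
  have hsummable : Summable (fun n : ℕ => ((n:ℝ) ^ ((13:ℝ)/12))⁻¹) :=
    Real.summable_nat_rpow_inv.mpr (by norm_num)
  refine ⟨Real.exp 2 + (Real.exp 10 * 288^8) * ∑' n : ℕ, ((n:ℝ) ^ ((13:ℝ)/12))⁻¹, ?_⟩
  intro x hx
  set f : ℕ → ℝ := fun d => (1:ℝ) / (d * K (LP d)) with hf
  set S := (Finset.Icc 2 x).filter Squarefree with hS
  have hdS : ∀ d ∈ S, 2 ≤ d ∧ d ≤ x ∧ Squarefree d := by
    intro d hd
    rw [hS, Finset.mem_filter, Finset.mem_Icc] at hd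
    exact ⟨hd.1.1, hd.1.2, hd.2⟩
  have hsplit := Finset.sum_filter_add_sum_filter_not S
    (fun d => ∀ p ∈ d.primeFactors, (K p)^6 ≤ p) f
  -- Case 1
  have hcase1 : ∑ d ∈ S.filter (fun d => ∀ p ∈ d.primeFactors, (K p)^6 ≤ p), f d
      ≤ Real.exp 2 := by
    set Pbad := (Finset.Icc 2 x).filter (fun q => Nat.Prime q ∧ (K q)^6 ≤ q) with hPbad
    have hstep : ∀ d ∈ S.filter (fun d => ∀ p ∈ d.primeFactors, (K p)^6 ≤ p),
        f d ≤ 1 / (d:ℝ) := by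
      intro d hd
      obtain ⟨hd2, hdx, hsq⟩ := hdS d (Finset.mem_filter.mp hd).1
      have hLPd := (hLP d (by omega) hsq).1
      have hKLP1 : 1 ≤ K (LP d) := hK1 _ (Nat.prime_of_mem_primeFactors hLPd)
      rw [hf]
      apply one_div_le_one_div_of_le (by positivity)
      have : (1:ℝ) ≤ (K (LP d) : ℝ) := by exact_mod_cast hKLP1
      nlinarith [show (0:ℝ) < (d:ℝ) by positivity]
    calc ∑ d ∈ S.filter (fun d => ∀ p ∈ d.primeFactors, (K p)^6 ≤ p), f d
        ≤ ∑ d ∈ S.filter (fun d => ∀ p ∈ d.primeFactors, (K p)^6 ≤ p), 1/(d:ℝ) :=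
          Finset.sum_le_sum hstep
      _ ≤ ∏ q ∈ Pbad, (1 + 1/(q:ℝ)) := by
          apply sqfree_sum_le_prod
          intro d hd
          rw [Finset.mem_filter] at hd
          obtain ⟨hd2, hdx, hsq⟩ := hdS d hd.1
          refine ⟨hsq, ?_⟩
          intro q hq
          have hqp := Nat.prime_of_mem_primeFactors hq
          have hqd := Nat.dvd_of_mem_primeFactors hq
          rw [hPbad, Finset.mem_filter, Finset.mem_Icc]
          exact ⟨⟨hqp.two_le, le_trans (Nat.le_of_dvd (by omega) hqd) hdx⟩,
            hqp, hd.2 q hq⟩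
      _ ≤ Real.exp (∑ q ∈ Pbad, 1/(q:ℝ)) := by
          apply prod_le_exp_sum
          intro q _; positivity
      _ ≤ Real.exp 2 := Real.exp_le_exp.mpr (bad_sum K hfib hK1 x)
  -- Case 2
  have hcase2 : ∑ d ∈ S.filter (fun d => ¬ ∀ p ∈ d.primeFactors, (K p)^6 ≤ p), f d
      ≤ (Real.exp 10 * 288^8) * ∑' n : ℕ, ((n:ℝ) ^ ((13:ℝ)/12))⁻¹ := by
    set Pgood := (Finset.Icc 2 x).filter (fun p => Nat.Prime p ∧ ¬ (K p)^6 ≤ p) with hPgood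
    set Mset : ℕ → Finset ℕ := fun p => (Finset.Icc 1 x).filter (fun m => Squarefree m ∧
        m.primeFactors ⊆ (Finset.Icc 2 x).filter
          (fun q => Nat.Prime q ∧ ((K q)^6 ≤ q ∨ q < p))) with hMset
    set G : ℕ → Finset ℕ := fun d => d.primeFactors.filter (fun q => ¬ (K q)^6 ≤ q) with hG
    set i : ℕ → (Σ _ : ℕ, ℕ) := fun d =>
      if h : (G d).Nonempty then ⟨(G d).max' h, d / (G d).max' h⟩ else ⟨0, 0⟩ with hidef
    set g : (Σ _ : ℕ, ℕ) → ℝ := fun pm => (pm.1:ℝ) ^ (-(7:ℝ)/6) * (1/(pm.2:ℝ)) with hgdef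
    have hDfacts : ∀ d ∈ S.filter (fun d => ¬ ∀ p ∈ d.primeFactors, (K p)^6 ≤ p),
        (G d).Nonempty := by
      intro d hd
      rw [Finset.mem_filter] at hd
      push_neg at hd
      obtain ⟨p, hp, hpb⟩ := hd.2
      exact ⟨p, by rw [hG]; exact Finset.mem_filter.mpr ⟨hp, Nat.not_le.mpr hpb⟩⟩
    have hstep : ∑ d ∈ S.filter (fun d => ¬ ∀ p ∈ d.primeFactors, (K p)^6 ≤ p), f d
        ≤ ∑ pm ∈ Pgood.sigma Mset, g pm := by
      apply sum_le_sum_inj _ _ i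
      · -- membership
        intro d hd
        have hne := hDfacts d hd
        obtain ⟨hd2, hdx, hsq⟩ := hdS d (Finset.mem_filter.mp hd).1
        set p₀ := (G d).max' hne with hp₀
        have hp₀G : p₀ ∈ G d := Finset.max'_mem _ _
        rw [hG, Finset.mem_filter] at hp₀G
        obtain ⟨hp₀pf, hp₀good⟩ := hp₀G
        have hp₀p := Nat.prime_of_mem_primeFactors hp₀pf
        have hp₀dvd := Nat.dvd_of_mem_primeFactors hp₀pf
        have hmdvd : d / p₀ ∣ d := Nat.div_dvd_of_dvd hp₀dvd
        have hdm : d = p₀ * (d / p₀) := (Nat.mul_div_cancel' hp₀dvd).symm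
        have hm1 : 1 ≤ d / p₀ := by
          rcases Nat.eq_zero_or_pos (d / p₀) with h0 | h1
          · rw [h0, mul_zero] at hdm; omega
          · exact h1
        rw [hidef]
        simp only [dif_pos hne]
        rw [Finset.mem_sigma]
        constructor
        · rw [hPgood, Finset.mem_filter, Finset.mem_Icc]
          exact ⟨⟨hp₀p.two_le, le_trans (Nat.le_of_dvd (by omega) hp₀dvd) hdx⟩,
            hp₀p, hp₀good⟩
        · rw [hMset]
          rw [Finset.mem_filter, Finset.mem_Icc]
          refine ⟨⟨hm1, le_trans (Nat.le_of_dvd (by omega) hmdvd) hdx⟩,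
            hsq.squarefree_of_dvd hmdvd, ?_⟩
          intro q hq
          have hqp := Nat.prime_of_mem_primeFactors hq
          have hqm := Nat.dvd_of_mem_primeFactors hq
          have hqd : q ∣ d := dvd_trans hqm hmdvd
          rw [Finset.mem_filter, Finset.mem_Icc]
          refine ⟨⟨hqp.two_le, le_trans (Nat.le_of_dvd (by omega) hqd) hdx⟩, hqp, ?_⟩
          by_cases hbq : (K q)^6 ≤ q
          · exact Or.inl hbq
          · right
            have hqG : q ∈ G d := by
              rw [hG, Finset.mem_filter]
              exact ⟨Nat.mem_primeFactors.mpr ⟨hqp, hqd, by omega⟩, hbq⟩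
            have hqle : q ≤ p₀ := Finset.le_max' _ _ hqG
            rcases lt_or_eq_of_le hqle with h | h
            · exact h
            · exfalso
              have hqm' : q ∣ d / p₀ := hqm
              obtain ⟨k, hk⟩ := hqm'
              rw [h] at hk
              refine hp₀p.not_isUnit (hsq p₀ ?_)
              rw [hdm, hk]
              exact ⟨k, by ring⟩
      · -- injectivity
        intro a ha b hb hab
        have hnea := hDfacts a ha
        have hneb := hDfacts b hb
        rw [hidef] at hab
        simp only [dif_pos hnea, dif_pos hneb] at hab
        have h1 : (G a).max' hnea = (G b).max' hneb := congrArg Sigma.fst hab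
        have h2 : a / (G a).max' hnea = b / (G b).max' hneb := congrArg Sigma.snd hab
        have hpa : (G a).max' hnea ∈ G a := Finset.max'_mem _ _
        have hpb : (G b).max' hneb ∈ G b := Finset.max'_mem _ _
        have hpa' : (G a).max' hnea ∈ a.primeFactors := (Finset.mem_filter.mp hpa).1
        have hpb' : (G b).max' hneb ∈ b.primeFactors := (Finset.mem_filter.mp hpb).1
        have hda := Nat.dvd_of_mem_primeFactors hpa'
        have hdb := Nat.dvd_of_mem_primeFactors hpb'
        have key : a = (G b).max' hneb * (b / (G b).max' hneb) := by
          rw [← h2, ← h1]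
          exact (Nat.mul_div_cancel' hda).symm
        rw [key, Nat.mul_div_cancel' hdb]
      · -- nonneg
        intro pm _
        rw [hgdef]
        have : (0:ℝ) ≤ (pm.1:ℝ) ^ (-(7:ℝ)/6) := Real.rpow_nonneg (by positivity) _
        positivity
      · -- pointwise bound
        intro d hd
        have hne := hDfacts d hd
        obtain ⟨hd2, hdx, hsq⟩ := hdS d (Finset.mem_filter.mp hd).1
        set p₀ := (G d).max' hne with hp₀
        have hp₀G : p₀ ∈ G d := Finset.max'_mem _ _
        rw [hG, Finset.mem_filter] at hp₀G
        obtain ⟨hp₀pf, hp₀good⟩ := hp₀G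
        have hp₀p := Nat.prime_of_mem_primeFactors hp₀pf
        have hp₀dvd := Nat.dvd_of_mem_primeFactors hp₀pf
        have hdm : d = p₀ * (d / p₀) := (Nat.mul_div_cancel' hp₀dvd).symm
        have hm1 : 1 ≤ d / p₀ := by
          rcases Nat.eq_zero_or_pos (d / p₀) with h0 | h1
          · rw [h0, mul_zero] at hdm; omega
          · exact h1
        rw [hidef]
        simp only [dif_pos hne]
        rw [hgdef, hf]
        have hKLP : K p₀ ≤ K (LP d) := (hLP d (by omega) hsq).2 p₀ hp₀pf
        have hKp₀1 : 1 ≤ K p₀ := hK1 _ hp₀p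
        have hp₀0 : (0:ℝ) < (p₀:ℝ) := by
          have := hp₀p.two_le; positivity
        have hm0 : (0:ℝ) < ((d/p₀ : ℕ):ℝ) := by exact_mod_cast hm1
        have hp16 : (p₀:ℝ) ^ ((1:ℝ)/6) ≤ (K (LP d) : ℝ) := by
          have h1 : (p₀:ℝ) ≤ ((K p₀ : ℝ))^(6:ℕ) := by
            exact_mod_cast le_of_lt (Nat.lt_of_not_le hp₀good)
          have h2 : (p₀:ℝ) ^ ((1:ℝ)/6) ≤ (((K p₀ : ℝ))^(6:ℕ)) ^ ((1:ℝ)/6) :=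
            Real.rpow_le_rpow (by positivity) h1 (by norm_num)
          have h3 : (((K p₀ : ℝ))^(6:ℕ)) ^ ((1:ℝ)/6) = (K p₀ : ℝ) := by
            rw [← Real.rpow_natCast ((K p₀ : ℝ)) 6, ← Real.rpow_mul (by positivity)]
            norm_num
          rw [h3] at h2
          calc (p₀:ℝ) ^ ((1:ℝ)/6) ≤ (K p₀ : ℝ) := h2
            _ ≤ (K (LP d) : ℝ) := by exact_mod_cast hKLP
        have hdR : (d:ℝ) = (p₀:ℝ) * ((d/p₀ : ℕ):ℝ) := by exact_mod_cast hdm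
        have h76 : (p₀:ℝ) ^ ((7:ℝ)/6) = (p₀:ℝ) * (p₀:ℝ) ^ ((1:ℝ)/6) := by
          rw [show (7:ℝ)/6 = 1 + 1/6 by norm_num, Real.rpow_add hp₀0, Real.rpow_one]
        have hden : ((d/p₀ : ℕ):ℝ) * (p₀:ℝ) ^ ((7:ℝ)/6) ≤ (d:ℝ) * (K (LP d) : ℝ) := by
          rw [hdR, h76]
          have hrp : (0:ℝ) ≤ (p₀:ℝ) ^ ((1:ℝ)/6) := Real.rpow_nonneg (by positivity) _
          nlinarith
        calc (1:ℝ) / ((d:ℝ) * (K (LP d) : ℝ))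
            ≤ 1 / (((d/p₀ : ℕ):ℝ) * (p₀:ℝ) ^ ((7:ℝ)/6)) := by
              apply one_div_le_one_div_of_le _ hden
              have : (0:ℝ) < (p₀:ℝ) ^ ((7:ℝ)/6) := Real.rpow_pos_of_pos hp₀0 _
              positivity
          _ = (p₀:ℝ) ^ (-(7:ℝ)/6) * (1/((d/p₀ : ℕ):ℝ)) := by
              rw [show -(7:ℝ)/6 = -((7:ℝ)/6) by norm_num,
                Real.rpow_neg (le_of_lt hp₀0)]
              rw [one_div, one_div, mul_inv]
              ring
    have hsig : ∑ pm ∈ Pgood.sigma Mset, g pm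
        = ∑ p ∈ Pgood, ∑ m ∈ Mset p, ((p:ℝ) ^ (-(7:ℝ)/6) * (1/(m:ℝ))) := by
      rw [Finset.sum_sigma]
    have hinner : ∀ p ∈ Pgood, ∑ m ∈ Mset p, ((p:ℝ) ^ (-(7:ℝ)/6) * (1/(m:ℝ)))
        ≤ (Real.exp 10 * 288^8) * (((p:ℝ) ^ ((13:ℝ)/12))⁻¹) := by
      intro p hp
      rw [hPgood, Finset.mem_filter, Finset.mem_Icc] at hp
      obtain ⟨⟨hp2, hpx⟩, hpp, hpg⟩ := hp
      have hp0 : (0:ℝ) < (p:ℝ) := by positivity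
      have hrp : (0:ℝ) ≤ (p:ℝ) ^ (-(7:ℝ)/6) := Real.rpow_nonneg (by positivity) _
      rw [← Finset.mul_sum]
      have hin := inner_m_sum K hfib hK1 x p hp2
      calc (p:ℝ) ^ (-(7:ℝ)/6) * ∑ m ∈ Mset p, (1:ℝ)/(m:ℝ)
          ≤ (p:ℝ) ^ (-(7:ℝ)/6) * ((Real.exp 10 * 288^8) * (p:ℝ) ^ ((1:ℝ)/12)) := by
            apply mul_le_mul_of_nonneg_left _ hrp
            rw [hMset] at *
            exact hin
        _ = (Real.exp 10 * 288^8) * (((p:ℝ) ^ ((13:ℝ)/12))⁻¹) := by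
            have h1 : (p:ℝ)^(-(7:ℝ)/6) * (p:ℝ)^((1:ℝ)/12)
                = (p:ℝ)^(-(7:ℝ)/6 + (1:ℝ)/12) := (Real.rpow_add hp0 _ _).symm
            have h2 : (-(7:ℝ)/6 + (1:ℝ)/12) = -((13:ℝ)/12) := by norm_num
            have h3 : (p:ℝ)^(-((13:ℝ)/12)) = ((p:ℝ)^((13:ℝ)/12))⁻¹ :=
              Real.rpow_neg (le_of_lt hp0) _
            calc (p:ℝ)^(-(7:ℝ)/6) * ((Real.exp 10 * 288^8) * (p:ℝ)^((1:ℝ)/12))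
                = (Real.exp 10 * 288^8) * ((p:ℝ)^(-(7:ℝ)/6) * (p:ℝ)^((1:ℝ)/12)) := by
                  ring
              _ = (Real.exp 10 * 288^8) * (((p:ℝ)^((13:ℝ)/12))⁻¹) := by
                  rw [h1, h2, h3]
    have htail : ∑ p ∈ Pgood, ((p:ℝ)^((13:ℝ)/12))⁻¹ ≤ ∑' n : ℕ, ((n:ℝ)^((13:ℝ)/12))⁻¹ :=
      hsummable.sum_le_tsum Pgood (fun b _ => by positivity)
    have hE : (0:ℝ) ≤ Real.exp 10 * 288^8 := by positivity
    calc ∑ d ∈ S.filter (fun d => ¬ ∀ p ∈ d.primeFactors, (K p)^6 ≤ p), f d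
        ≤ ∑ pm ∈ Pgood.sigma Mset, g pm := hstep
      _ = ∑ p ∈ Pgood, ∑ m ∈ Mset p, ((p:ℝ) ^ (-(7:ℝ)/6) * (1/(m:ℝ))) := hsig
      _ ≤ ∑ p ∈ Pgood, (Real.exp 10 * 288^8) * (((p:ℝ) ^ ((13:ℝ)/12))⁻¹) :=
          Finset.sum_le_sum hinner
      _ = (Real.exp 10 * 288^8) * ∑ p ∈ Pgood, ((p:ℝ) ^ ((13:ℝ)/12))⁻¹ := by
          rw [← Finset.mul_sum]
      _ ≤ (Real.exp 10 * 288^8) * ∑' n : ℕ, ((n:ℝ) ^ ((13:ℝ)/12))⁻¹ :=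
          mul_le_mul_of_nonneg_left htail hE
  linarith [hsplit, hcase1, hcase2]
end
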